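/- Every twisted involution w has at least one involution word (R̂(w) ≠ ∅). Moreover, if w ∈ I_* and i ∈ B satisfy ℓ(w · s i) < ℓ(w), and v is defined to be w · (s i) if (s i)* · w · (s i) = w and to be (s i)* · w · (s i) otherwise, then v ∈ I_*, ℓ̂(w) = ℓ̂(v) + 1, and for every involution word a for v, the word a ++ [i] is an involution word for w. -/

import Mathlib

/-!
Common setup: twisted Coxeter systems, involution words, braid/half-braid moves.
-/

noncomputable section
open scoped Classical

namespace TwistedCoxeter

variable {B : Type*} {W : Type*} [Group W] {M : CoxeterMatrix B}

/-- A twisting of a Coxeter system: a group automorphism `auto` of `W` with `auto ∘ auto = id`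
together with an involution `star` of the index set, compatible on simple reflections. -/
structure Twisting (cs : CoxeterSystem M W) where
  auto : W →* W
  star : B → B
  auto_auto : ∀ w, auto (auto w) = w
  star_star : ∀ i, star (star i) = i
  auto_simple : ∀ i, auto (cs.simple i) = cs.simple (star i)

/-- The trivial twisting. -/
def trivialTwisting (cs : CoxeterSystem M W) : Twisting cs where
  auto := MonoidHom.id W
  star := id
  auto_auto _ := rfl
  star_star _ := rfl
  auto_simple _ := rfl

variable {cs : CoxeterSystem M W}

/-- `w` is a twisted involution: `w* = w⁻¹`. -/
def IsTwistedInvolution (t : Twisting cs) (w : W) : Prop := t.auto w = w⁻¹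

/-- One step of the recursion defining `iota`. -/
def invStep (t : Twisting cs) (z : W) (i : B) : W :=
  if cs.length (z * cs.simple i) < cs.length z then z
  else if t.auto (cs.simple i) * z * cs.simple i = z then z * cs.simple i
  else t.auto (cs.simple i) * z * cs.simple i

/-- The twisted involution obtained from a word, via the "demazure-like" recursion
`ι([]) = 1`, `ι(a ++ [i]) = invStep (ι a) i`. -/
def iota (t : Twisting cs) (a : List B) : W := a.foldl (invStep t) 1

/-- `a` is an involution word for `w`: `ι(a) = w` and `a` has minimal length among
all words with this property. -/
def IsInvolutionWord (t : Twisting cs) (w : W) (a : List B) : Prop :=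
  iota t a = w ∧ ∀ b : List B, iota t b = w → a.length ≤ b.length

/-- The set `R̂(w)` of involution words for `w`. -/
def invWords (t : Twisting cs) (w : W) : Set (List B) := {a | IsInvolutionWord t w a}

/-- `ℓ̂(w)`: the minimal length of a word `a` with `ι(a) = w`. -/
def hatLength (t : Twisting cs) (w : W) : ℕ :=
  sInf {n | ∃ a : List B, iota t a = w ∧ a.length = n}

/-- The alternating word `[i, j, i, j, ...]` of length `m` (starting with `i`). -/
def altWord (i j : B) : ℕ → List B
  | 0 => []
  | n + 1 => i :: altWord j i n

/-- Words `a` and `b` differ by a braid move. -/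
def BraidMove (M : CoxeterMatrix B) (a b : List B) : Prop :=
  ∃ (u v : List B) (i j : B), i ≠ j ∧ M i j ≠ 0 ∧
    a = u ++ altWord i j (M i j) ++ v ∧ b = u ++ altWord j i (M i j) ++ v

/-- The quantity `m_*(i,j)`. -/
def mstar (t : Twisting cs) (i j : B) : ℕ :=
  if M i j ≠ 0 ∧ M i j % 2 = 1 ∧ ({t.star i, t.star j} : Set B) = {i, j} then
    (M i j + 1) / 2
  else if M i j ≠ 0 ∧ M i j % 2 = 0 ∧ t.star i = i ∧ t.star j = j then
    M i j / 2 + 1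
  else if M i j ≠ 0 ∧ M i j % 2 = 0 ∧ t.star i = j then
    M i j / 2
  else M i j

/-- Words `a` and `b` differ by a half-braid move. -/
def HalfBraidMove (t : Twisting cs) (a b : List B) : Prop :=
  ∃ (v : List B) (i j : B), i ≠ j ∧ M i j ≠ 0 ∧ mstar t i j < M i j ∧
    a = altWord i j (mstar t i j) ++ v ∧ b = altWord j i (mstar t i j) ++ v

/-- Words `a` and `b` differ by a generalized half-braid move. -/
def GenHalfBraidMove (t : Twisting cs) (a b : List B) : Prop :=
  ∃ (r v : List B) (i j : B) (m : ℕ), i ≠ j ∧ 1 ≤ m ∧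
    a = r ++ altWord i j m ++ v ∧ b = r ++ altWord j i m ++ v ∧
    ∃ z : W, IsTwistedInvolution t z ∧
      IsInvolutionWord t z (r ++ altWord i j m) ∧ IsInvolutionWord t z (r ++ altWord j i m)

/-- `S` is an equivalence class of the equivalence relation on words generated by the
(symmetric) move relation `E`: any two elements of `S` are connected by a finite chain of
moves, and `S` is closed under moves. -/
def IsMoveClass (E : List B → List B → Prop) (S : Set (List B)) : Prop :=
  (∀ a ∈ S, ∀ b ∈ S, Relation.ReflTransGen E a b) ∧
  (∀ a ∈ S, ∀ b, E a b → b ∈ S)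

/-- The twisted Coxeter system is perfectly braided if each `R̂(w)`, for `w` a twisted
involution, is an equivalence class of the relation generated by braid moves and
half-braid moves. -/
def PerfectlyBraided (t : Twisting cs) : Prop :=
  ∀ w : W, IsTwistedInvolution t w →
    IsMoveClass (fun a b => BraidMove M a b ∨ HalfBraidMove t a b) (invWords t w)

end TwistedCoxeter

/-!
Appending `i` to an involution word of `v` gives a word for `w`, so `ℓ̂(w) ≤ ℓ̂(v) + 1`. For the
reverse inequality we show, after Richardson–Springer and Hultman, that `ℓ̂` is strictly monotone
along the Bruhat order on twisted involutions, and use `v < w`. Monotonicity is proved by induction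
on `ℓ(w)`: peel off the last letter `j` of an involution word of `w` and carry `u ≤ w` down along
`j` with the twisted lifting property, which comes from the ordinary lifting property of the Bruhat
order and hence from the strong exchange condition.
-/

namespace CoxeterSystem

variable {B W : Type*} [Group W] {M : CoxeterMatrix B} (cs : CoxeterSystem M W)

local prefix:100 "s" => cs.simple
local prefix:100 "π" => cs.wordProd
local prefix:100 "ℓ" => cs.length
local prefix:100 "ris" => cs.rightInvSeq

-- `s i` acts on `W × ℤˣ` by conjugating the first coordinate and flipping the sign at `s i`; the
-- induced action of `W` makes the parity of the number of occurrences of `t` in the right inversion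
-- sequence of a word an invariant of its product.
def signedConj (i : B) : Equiv.Perm (W × ℤˣ) :=
  Function.Involutive.toPerm (fun p => (s i * p.1 * s i, if p.1 = s i then -p.2 else p.2)) <| by
    rintro ⟨t, e⟩
    by_cases h : t = s i <;> simp [h, mul_assoc, mul_eq_one_iff_eq_inv, cs.inv_simple]

theorem signedConj_apply (i : B) (t : W) (e : ℤˣ) :
    cs.signedConj i (t, e) = (s i * t * s i, if t = s i then -e else e) := rfl

private theorem conj_eq_iff {g t x : W} : g * t * g⁻¹ = x ↔ t = g⁻¹ * x * g := by
  constructor <;> rintro rfl <;> group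

theorem signedConj_mul_pow_apply (i j : B) (n : ℕ) (t : W) (e : ℤˣ) :
    ((cs.signedConj i * cs.signedConj j) ^ n) (t, e) =
      ((s i * s j) ^ n * t * ((s i * s j) ^ n)⁻¹,
        e * ∏ k ∈ Finset.range (2 * n), if t = s j * (s i * s j) ^ k then -1 else 1) := by
  set c := s i * s j
  have hc : c⁻¹ = s j * s i := by simp [c, cs.inv_simple]
  have hflip (k : ℕ) : (c ^ k)⁻¹ * s j * c ^ k = s j * c ^ (2 * k) := by
    have : s j * c * (s j)⁻¹ = c⁻¹ := by simp [hc, c, mul_assoc, cs.inv_simple]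
    have h2 := conj_pow (a := s j) (b := c) (i := k)
    rw [this, inv_pow] at h2
    rw [h2, two_mul, pow_add]
    simp [mul_assoc, cs.inv_simple]
  induction n with
  | zero => simp
  | succ n ih =>
    rw [pow_succ', Equiv.Perm.mul_apply, ih, Equiv.Perm.mul_apply, signedConj_apply,
      signedConj_apply]
    have h₁ : c ^ n * t * (c ^ n)⁻¹ = s j ↔ t = s j * c ^ (2 * n) := by
      rw [conj_eq_iff, hflip]
    have h₂ : s j * (c ^ n * t * (c ^ n)⁻¹) * s j = s i ↔ t = s j * c ^ (2 * n + 1) := by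
      have key : (s j * c ^ n)⁻¹ * s i * (s j * c ^ n) = s j * c ^ (2 * n + 1) :=
        calc (s j * c ^ n)⁻¹ * s i * (s j * c ^ n) = (c ^ n)⁻¹ * s j * c ^ n * c := by
              rw [mul_assoc _ (c ^ n) c, ← pow_succ, pow_succ', mul_inv_rev, cs.inv_simple]
              simp only [c, mul_assoc]
          _ = s j * c ^ (2 * n + 1) := by rw [hflip, pow_succ, mul_assoc]
      rw [← key, ← conj_eq_iff]
      simp [mul_assoc, cs.inv_simple]
    refine Prod.ext ?_ ?_
    · rw [pow_succ', mul_inv_rev, hc]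
      simp only [c, mul_assoc]
    · rw [if_congr h₂ rfl rfl, if_congr h₁ rfl rfl, show 2 * (n + 1) = 2 * n + 1 + 1 by ring,
        Finset.prod_range_succ, Finset.prod_range_succ]
      split_ifs <;> simp

theorem isLiftable_signedConj : M.IsLiftable cs.signedConj := by
  intro i j
  ext ⟨t, e⟩ : 1
  -- the signs for `k` and `k + M i j` agree, so they cancel in pairs
  rw [signedConj_mul_pow_apply, cs.simple_mul_simple_pow, two_mul, Finset.prod_range_add]
  simp only [pow_add, cs.simple_mul_simple_pow, one_mul, ← Finset.prod_mul_distrib]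
  rw [Finset.prod_eq_one fun k _ => by split_ifs <;> rfl]
  simp

def signHom : W →* Equiv.Perm (W × ℤˣ) := cs.lift ⟨cs.signedConj, cs.isLiftable_signedConj⟩

theorem signHom_simple (i : B) : cs.signHom (s i) = cs.signedConj i :=
  cs.lift_apply_simple cs.isLiftable_signedConj i

theorem signHom_wordProd_apply (ω : List B) (t : W) (e : ℤˣ) :
    cs.signHom (π ω) (t, e) = (π ω * t * (π ω)⁻¹, e * (-1) ^ (ris ω).count t) := by
  induction ω with
  | nil => simp
  | cons i ω ih =>
    rw [wordProd_cons, map_mul, Equiv.Perm.mul_apply, ih, signHom_simple, signedConj_apply,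
      conj_eq_iff, rightInvSeq, List.count_cons]
    refine Prod.ext (by simp [mul_assoc, cs.inv_simple]) ?_
    dsimp only
    by_cases h : t = (π ω)⁻¹ * s i * π ω
    · rw [if_pos h, if_pos (beq_iff_eq.mpr h.symm), pow_succ, mul_neg_one, mul_neg]
    · rw [if_neg h, if_neg (mt beq_iff_eq.mp (Ne.symm h)), add_zero]

def reflSign (w t : W) : ℤˣ := (cs.signHom w (t, 1)).2

theorem signHom_apply (w t : W) (e : ℤˣ) :
    cs.signHom w (t, e) = (w * t * w⁻¹, e * cs.reflSign w t) := by
  obtain ⟨ω, rfl⟩ := cs.wordProd_surjective w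
  simp [reflSign, signHom_wordProd_apply]

theorem reflSign_wordProd (ω : List B) (t : W) :
    cs.reflSign (π ω) t = (-1) ^ (ris ω).count t := by
  simp [reflSign, signHom_wordProd_apply]

theorem reflSign_mul (g h t : W) :
    cs.reflSign (g * h) t = cs.reflSign h t * cs.reflSign g (h * t * h⁻¹) := by
  show (cs.signHom (g * h) (t, 1)).2 = _
  rw [map_mul, Equiv.Perm.mul_apply, cs.signHom_apply h, cs.signHom_apply g, one_mul]

theorem reflSign_self {t : W} (ht : cs.IsReflection t) : cs.reflSign t t = -1 := by
  obtain ⟨w, i, rfl⟩ := ht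
  rw [mul_assoc]
  have hw : cs.reflSign w⁻¹ (w * (s i * w⁻¹)) * cs.reflSign w (s i) = 1 := by
    have := cs.reflSign_mul w w⁻¹ (w * (s i * w⁻¹))
    rwa [mul_inv_cancel, show w⁻¹ * (w * (s i * w⁻¹)) * w⁻¹⁻¹ = s i by group, reflSign,
      map_one, Equiv.Perm.one_apply, eq_comm] at this
  have hi : cs.reflSign (s i) (s i) = -1 := by
    simp [reflSign, signHom_simple, signedConj_apply]
  rw [reflSign_mul, reflSign_mul, show w⁻¹ * (w * (s i * w⁻¹)) * w⁻¹⁻¹ = s i by group,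
    show s i * w⁻¹ * (w * (s i * w⁻¹)) * (s i * w⁻¹)⁻¹ = s i by simp [mul_assoc, cs.inv_simple],
    hi, mul_right_comm, hw, one_mul]

theorem reflSign_mul_self (w : W) {t : W} (ht : cs.IsReflection t) :
    cs.reflSign (w * t) t = -cs.reflSign w t := by
  rw [reflSign_mul, cs.reflSign_self ht, mul_inv_cancel_right, neg_one_mul]

-- The strong exchange condition.
theorem mem_rightInvSeq_iff_isRightInversion {ω : List B} (hω : cs.IsReduced ω) {t : W} :
    t ∈ ris ω ↔ cs.IsRightInversion (π ω) t := by
  refine ⟨cs.isRightInversion_of_mem_rightInvSeq hω, fun ⟨ht, hlt⟩ => ?_⟩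
  by_contra hmem
  obtain ⟨ω', hω', hω'eq⟩ := cs.exists_isReduced (π ω * t)
  by_cases hmem' : t ∈ ris ω'
  · have := (cs.isRightInversion_of_mem_rightInvSeq hω' hmem').2
    rw [← hω'eq, mul_assoc, ht.mul_self, mul_one] at this
    omega
  · have h₁ := cs.reflSign_mul_self (π ω) ht
    rw [hω'eq, reflSign_wordProd, reflSign_wordProd, List.count_eq_zero.mpr hmem,
      List.count_eq_zero.mpr hmem'] at h₁
    exact absurd h₁ (by decide)

theorem length_simple_mul_mul_simple_eq_add_two {x : W} {i j : B} (hj : ℓ x < ℓ (x * s j))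
    (hi : ℓ x < ℓ (s i * x)) (hne : s i * x * s j ≠ x) : ℓ (s i * x * s j) = ℓ x + 2 := by
  obtain ⟨ω, hω, rfl⟩ := cs.exists_isReduced x
  have hi' : ℓ (s i * π ω) = ℓ (π ω) + 1 := by have := cs.length_simple_mul (π ω) i; omega
  rcases cs.length_mul_simple (s i * π ω) j with h | h
  · omega
  have hiω : cs.IsReduced (i :: ω) := by
    rw [IsReduced, wordProd_cons, hi', hω.eq, List.length_cons]
  have hmem : s j ∈ ris (i :: ω) := (cs.mem_rightInvSeq_iff_isRightInversion hiω).mpr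
    ⟨cs.isReflection_simple j, by rw [wordProd_cons]; omega⟩
  rcases List.mem_cons.mp hmem with h' | h'
  · exact absurd (by simp [h', mul_assoc, cs.simple_mul_simple_cancel_left]) hne
  · have := ((cs.mem_rightInvSeq_iff_isRightInversion hω).mp h').2
    omega

theorem length_simple_mul_mul_simple_add_two_eq {x : W} {i j : B} (hj : ℓ (x * s j) < ℓ x)
    (hi : ℓ (s i * x) < ℓ x) (hne : s i * x * s j ≠ x) : ℓ (s i * x * s j) + 2 = ℓ x := by
  have hj' : ℓ (x * s j) + 1 = ℓ x := by have := cs.length_mul_simple x j; omega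
  rw [mul_assoc]
  rcases cs.length_simple_mul (x * s j) i with h | h
  · have h₂ := cs.length_simple_mul_mul_simple_eq_add_two (x := x * s j) (i := i) (j := j)
      (by simp [mul_assoc]; omega) (by omega)
      (fun h' => hne (by simpa [mul_assoc] using congrArg (· * s j) h'))
    simp only [mul_assoc, simple_mul_simple_self, mul_one] at h₂
    omega
  · omega

theorem mul_eq_or_length_mul_mul_simple_lt {w t : W} {j : B} (ht : cs.IsReflection t)
    (hwt : ℓ (w * t) < ℓ w) (hwj : ℓ (w * s j) < ℓ w) :
    w * t = w * s j ∨ ℓ (w * t * s j) < ℓ (w * s j) := by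
  obtain ⟨η, hη, hηw⟩ := cs.exists_isReduced (w * s j)
  have hw : w = π (η.concat j) := by
    rw [List.concat_eq_append, wordProd_append, ← hηw]
    simp
  have hred : cs.IsReduced (η.concat j) := by
    have := cs.length_mul_simple w j
    rw [IsReduced, ← hw, List.length_concat, ← hη.eq, ← hηw]
    omega
  have hmem : t ∈ ris (η.concat j) :=
    (cs.mem_rightInvSeq_iff_isRightInversion hred).mpr ⟨ht, hw ▸ hwt⟩
  rw [rightInvSeq_concat, List.concat_eq_append, List.mem_append, List.mem_singleton,
    List.mem_map] at hmem
  rcases hmem with ⟨r, hr, rfl⟩ | rfl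
  · right
    have := ((cs.mem_rightInvSeq_iff_isRightInversion hη).mp hr).2
    rw [← hηw] at this
    simpa [mul_assoc, cs.inv_simple] using this
  · exact Or.inl rfl

def BruhatLE : W → W → Prop :=
  Relation.ReflTransGen fun x y => ∃ t, cs.IsReflection t ∧ x * t = y ∧ ℓ x < ℓ y

variable {cs}

theorem bruhatLE_mul_reflection {x t : W} (ht : cs.IsReflection t) (h : ℓ x < ℓ (x * t)) :
    cs.BruhatLE x (x * t) :=
  .single ⟨t, ht, rfl, h⟩

theorem bruhatLE_of_length_mul_reflection_lt {x t : W} (ht : cs.IsReflection t)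
    (h : ℓ (x * t) < ℓ x) : cs.BruhatLE (x * t) x :=
  .single ⟨t, ht, by rw [mul_assoc, ht.mul_self, mul_one], h⟩

theorem bruhatLE_of_length_reflection_mul_lt {x t : W} (ht : cs.IsReflection t)
    (h : ℓ (t * x) < ℓ x) : cs.BruhatLE (t * x) x := by
  have hx : t * x * (x⁻¹ * t * x) = x :=
    calc t * x * (x⁻¹ * t * x) = t * t * x := by group
      _ = x := by rw [ht.mul_self, one_mul]
  exact .single ⟨x⁻¹ * t * x, by simpa using ht.conj x⁻¹, hx, h⟩

namespace BruhatLE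

theorem length_le {u w : W} (h : cs.BruhatLE u w) : ℓ u ≤ ℓ w := by
  induction h with
  | refl => rfl
  | tail _ hstep ih => obtain ⟨_, _, _, hlt⟩ := hstep; omega

theorem eq_or_length_lt {u w : W} (h : cs.BruhatLE u w) : u = w ∨ ℓ u < ℓ w := by
  rcases Relation.ReflTransGen.cases_tail h with rfl | ⟨_, h', _, _, _, hlt⟩
  · exact .inl rfl
  · exact .inr ((length_le h').trans_lt hlt)

theorem inv {u w : W} (h : cs.BruhatLE u w) : cs.BruhatLE u⁻¹ w⁻¹ := by
  induction h with
  | refl => exact .refl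
  | @tail y _ _ hstep ih =>
    obtain ⟨t, ht, rfl, hlt⟩ := hstep
    refine ih.tail ⟨_, ht.conj y, ?_, by rwa [cs.length_inv, cs.length_inv]⟩
    rw [mul_inv_rev, ht.inv]
    group

theorem le_mul_simple {u w : W} {j : B} (h : cs.BruhatLE u w) (hw : cs.IsRightDescent w j)
    (hu : ¬cs.IsRightDescent u j) : cs.BruhatLE u (w * s j) := by
  induction h with
  | refl => exact absurd hw hu
  | @tail w' _ hb hstep ih =>
    obtain ⟨t, ht, rfl, hlt⟩ := hstep
    have hr : cs.IsReflection (s j * t * s j) := by simpa [cs.inv_simple] using ht.conj (s j)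
    have hconj : w' * s j * (s j * t * s j) = w' * t * s j := by simp [mul_assoc]
    by_cases hw' : cs.IsRightDescent w' j
    · have := cs.isRightDescent_iff.mp hw
      exact (ih hw').tail ⟨_, hr, hconj, by rw [isRightDescent_iff] at hw'; omega⟩
    rcases cs.mul_eq_or_length_mul_mul_simple_lt (w := w' * t) ht
      (by rwa [mul_assoc w' t t, ht.mul_self, mul_one]) hw with h | h
    · rwa [← h, mul_assoc, ht.mul_self, mul_one]
    · rw [mul_assoc w' t t, ht.mul_self, mul_one] at h
      rw [not_isRightDescent_iff] at hw'
      exact (hb.trans (bruhatLE_mul_reflection (cs.isReflection_simple j) (by omega))).tail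
        ⟨_, hr, hconj, h⟩

theorem mul_simple {u w : W} {j : B} (h : cs.BruhatLE u w) (hu : cs.IsRightDescent u j)
    (hw : cs.IsRightDescent w j) : cs.BruhatLE (u * s j) (w * s j) :=
  le_mul_simple ((bruhatLE_of_length_mul_reflection_lt (cs.isReflection_simple j) hu).trans h) hw
    (cs.isRightDescent_iff_not_isRightDescent_mul.mp hu)

theorem le_simple_mul {u w : W} {j : B} (h : cs.BruhatLE u w) (hw : cs.IsLeftDescent w j)
    (hu : ¬cs.IsLeftDescent u j) : cs.BruhatLE u (s j * w) := by
  rw [← isRightDescent_inv_iff] at hw hu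
  simpa [cs.inv_simple] using (h.inv.le_mul_simple hw hu).inv

theorem simple_mul {u w : W} {j : B} (h : cs.BruhatLE u w) (hu : cs.IsLeftDescent u j)
    (hw : cs.IsLeftDescent w j) : cs.BruhatLE (s j * u) (s j * w) := by
  rw [← isRightDescent_inv_iff] at hw hu
  simpa [cs.inv_simple] using (h.inv.mul_simple hu hw).inv

end BruhatLE

end CoxeterSystem

namespace TwistedCoxeter

open CoxeterSystem

variable {B W : Type*} [Group W] {M : CoxeterMatrix B} {cs : CoxeterSystem M W} (t : Twisting cs)

local prefix:100 "s" => cs.simple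
local prefix:100 "π" => cs.wordProd
local prefix:100 "ℓ" => cs.length

-- The twisted action of `s i` on `I_*`: `invStep t z i = twistedAct t z i` unless `i` is a right
-- descent of `z`, and the `v` of the theorem is `twistedAct t w i`.
def twistedAct (w : W) (i : B) : W :=
  if t.auto (s i) * w * s i = w then w * s i else t.auto (s i) * w * s i

theorem Twisting.auto_wordProd (ω : List B) : t.auto (π ω) = π (ω.map t.star) := by
  induction ω with
  | nil => simp
  | cons i ω ih => simp [wordProd_cons, ih, t.auto_simple]

theorem Twisting.length_auto (w : W) : ℓ (t.auto w) = ℓ w := by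
  have hle (v : W) : ℓ (t.auto v) ≤ ℓ v := by
    obtain ⟨ω, hω, rfl⟩ := cs.exists_isReduced v
    simpa [t.auto_wordProd, hω.eq] using cs.length_wordProd_le (ω.map t.star)
  exact le_antisymm (hle w) (by simpa [t.auto_auto] using hle (t.auto w))

theorem Twisting.auto_simple_mul_self (i : B) : t.auto (s i) * t.auto (s i) = 1 := by
  rw [← map_mul, cs.simple_mul_simple_self, map_one]

theorem Twisting.auto_simple_inv (i : B) : (t.auto (s i))⁻¹ = t.auto (s i) := by
  rw [← map_inv, cs.inv_simple]

theorem Twisting.auto_simple_mul_mul_simple_eq_iff {w : W} (i : B) :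
    t.auto (s i) * w * s i = w ↔ t.auto (s i) * w = w * s i := by
  rw [← mul_inv_eq_iff_eq_mul, cs.inv_simple]

variable {t}

theorem IsTwistedInvolution.length_auto_simple_mul {w : W} (hw : IsTwistedInvolution t w)
    (i : B) : ℓ (t.auto (s i) * w) = ℓ (w * s i) := by
  rw [← cs.length_inv, mul_inv_rev, ← hw, ← map_inv, cs.inv_simple, ← map_mul, t.length_auto]

theorem isTwistedInvolution_twistedAct {w : W} (hw : IsTwistedInvolution t w) (i : B) :
    IsTwistedInvolution t (twistedAct t w i) := by
  unfold IsTwistedInvolution at *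
  unfold TwistedCoxeter.twistedAct
  split_ifs with h
  · have hcomm := congrArg (·⁻¹) ((t.auto_simple_mul_mul_simple_eq_iff i).mp h)
    simp only [mul_inv_rev, t.auto_simple_inv, cs.inv_simple] at hcomm
    rw [map_mul, hw, mul_inv_rev, cs.inv_simple, hcomm]
  · simp [hw, t.auto_auto, mul_assoc, t.auto_simple_inv, cs.inv_simple]

theorem twistedAct_twistedAct (w : W) (i : B) : twistedAct t (twistedAct t w i) i = w := by
  by_cases h : t.auto (s i) * w * s i = w
  · have h' : t.auto (s i) * (w * s i) * s i = w * s i := by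
      rw [← mul_assoc, simple_mul_simple_cancel_right, (t.auto_simple_mul_mul_simple_eq_iff i).mp h]
    simp [twistedAct, h, h']
  · have h' : t.auto (s i) * (t.auto (s i) * w * s i) * s i = w := by
      simp only [← mul_assoc, t.auto_simple_mul_self, one_mul, simple_mul_simple_cancel_right]
    simp [twistedAct, h, h', Ne.symm h]

theorem IsTwistedInvolution.length_auto_simple_mul_mul_simple_add_two_eq {w : W}
    (hw : IsTwistedInvolution t w) {i : B} (h : cs.IsRightDescent w i)
    (hne : t.auto (s i) * w * s i ≠ w) : ℓ (t.auto (s i) * w * s i) + 2 = ℓ w := by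
  rw [t.auto_simple] at hne ⊢
  refine cs.length_simple_mul_mul_simple_add_two_eq h ?_ hne
  rw [← t.auto_simple, hw.length_auto_simple_mul]
  exact h

theorem IsTwistedInvolution.length_twistedAct_lt {w : W} (hw : IsTwistedInvolution t w) {i : B}
    (h : cs.IsRightDescent w i) : ℓ (twistedAct t w i) < ℓ w := by
  unfold twistedAct
  split_ifs with hfix
  · exact h
  · have := hw.length_auto_simple_mul_mul_simple_add_two_eq h hfix
    omega

theorem IsTwistedInvolution.length_lt_length_twistedAct {z : W} (hz : IsTwistedInvolution t z)
    {i : B} (h : ¬cs.IsRightDescent z i) : ℓ z < ℓ (twistedAct t z i) := by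
  rw [not_isRightDescent_iff] at h
  unfold twistedAct
  split_ifs with hfix
  · omega
  · rw [t.auto_simple] at hfix ⊢
    have := cs.length_simple_mul_mul_simple_eq_add_two (x := z) (by omega)
      (by rw [← t.auto_simple, hz.length_auto_simple_mul]; omega) hfix
    omega

theorem IsTwistedInvolution.isRightDescent_twistedAct_iff {w : W}
    (hw : IsTwistedInvolution t w) {i : B} :
    cs.IsRightDescent (twistedAct t w i) i ↔ ¬cs.IsRightDescent w i := by
  have hv := isTwistedInvolution_twistedAct hw i
  by_cases h : cs.IsRightDescent w i
  · refine iff_of_false (fun hd => ?_) (not_not.mpr h)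
    have := hv.length_twistedAct_lt hd
    rw [twistedAct_twistedAct] at this
    exact absurd (hw.length_twistedAct_lt h) (by omega)
  · refine iff_of_true (by_contra fun hd => ?_) h
    have := hv.length_lt_length_twistedAct hd
    rw [twistedAct_twistedAct] at this
    exact absurd (hw.length_lt_length_twistedAct h) (by omega)

theorem IsTwistedInvolution.isLeftDescent_mul_simple_iff {w : W} (hw : IsTwistedInvolution t w)
    {i : B} (h : cs.IsRightDescent w i) :
    cs.IsLeftDescent (w * s i) (t.star i) ↔ t.auto (s i) * w * s i ≠ w := by
  rw [IsLeftDescent, ← t.auto_simple, ← mul_assoc]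
  refine ⟨fun hl hfix => ?_, fun hne => ?_⟩
  · rw [hfix] at hl
    exact absurd h (by unfold IsRightDescent; omega)
  · have := hw.length_auto_simple_mul_mul_simple_add_two_eq h hne
    have := cs.isRightDescent_iff.mp h
    omega

theorem iota_append_singleton (a : List B) (i : B) :
    iota t (a ++ [i]) = invStep t (iota t a) i := by
  simp [iota, List.foldl_append]

theorem invStep_of_isRightDescent {z : W} {i : B} (h : cs.IsRightDescent z i) :
    invStep t z i = z :=
  if_pos h

theorem invStep_of_not_isRightDescent {z : W} {i : B} (h : ¬cs.IsRightDescent z i) :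
    invStep t z i = twistedAct t z i :=
  if_neg h

theorem isTwistedInvolution_iota (a : List B) : IsTwistedInvolution t (iota t a) := by
  induction a using List.reverseRecOn with
  | nil => simp [IsTwistedInvolution, iota]
  | append_singleton a i ih =>
    rw [iota_append_singleton]
    by_cases h : cs.IsRightDescent (iota t a) i
    · rwa [invStep_of_isRightDescent h]
    · rw [invStep_of_not_isRightDescent h]
      exact isTwistedInvolution_twistedAct ih i

theorem IsTwistedInvolution.invStep_twistedAct {w : W} (hw : IsTwistedInvolution t w) {i : B}
    (h : cs.IsRightDescent w i) : invStep t (twistedAct t w i) i = w := by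
  rw [invStep_of_not_isRightDescent fun h' => hw.isRightDescent_twistedAct_iff.mp h' h,
    twistedAct_twistedAct]

theorem IsTwistedInvolution.exists_iota_eq {w : W} (hw : IsTwistedInvolution t w) :
    ∃ a, iota t a = w := by
  induction h : ℓ w using Nat.strong_induction_on generalizing w with
  | _ n ih =>
  by_cases h1 : w = 1
  · exact ⟨[], by simp [iota, h1]⟩
  obtain ⟨i, hi⟩ := cs.exists_rightDescent_of_ne_one h1
  obtain ⟨a, ha⟩ := ih _ (h ▸ hw.length_twistedAct_lt hi) (isTwistedInvolution_twistedAct hw i) rfl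
  exact ⟨a ++ [i], by rw [iota_append_singleton, ha, hw.invStep_twistedAct hi]⟩

theorem hatLength_le {a : List B} {w : W} (h : iota t a = w) : hatLength t w ≤ a.length :=
  Nat.sInf_le ⟨a, h, rfl⟩

theorem exists_iota_eq_length_eq_hatLength {w : W} (h : ∃ a, iota t a = w) :
    ∃ a, iota t a = w ∧ a.length = hatLength t w := by
  obtain ⟨a, ha⟩ := h
  have hne : {n | ∃ a : List B, iota t a = w ∧ a.length = n}.Nonempty := ⟨a.length, a, ha, rfl⟩
  exact Nat.sInf_mem hne

theorem isInvolutionWord_iff {w : W} {a : List B} :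
    IsInvolutionWord t w a ↔ iota t a = w ∧ a.length = hatLength t w := by
  refine ⟨fun ⟨ha, hmin⟩ => ⟨ha, le_antisymm ?_ (hatLength_le ha)⟩,
    fun ⟨ha, hlen⟩ => ⟨ha, fun b hb => hlen ▸ hatLength_le hb⟩⟩
  obtain ⟨b, hb, hlen⟩ := exists_iota_eq_length_eq_hatLength ⟨a, ha⟩
  exact hlen ▸ hmin b hb

theorem IsTwistedInvolution.hatLength_le_hatLength_twistedAct_add_one {w : W}
    (hw : IsTwistedInvolution t w) {i : B} (h : cs.IsRightDescent w i) :
    hatLength t w ≤ hatLength t (twistedAct t w i) + 1 := by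
  obtain ⟨a, ha, hlen⟩ :=
    exists_iota_eq_length_eq_hatLength (isTwistedInvolution_twistedAct hw i).exists_iota_eq
  have := hatLength_le (t := t) (a := a ++ [i])
    (by rw [iota_append_singleton, ha, hw.invStep_twistedAct h])
  simpa [hlen] using this

theorem IsTwistedInvolution.exists_hatLength_twistedAct_lt {w : W} (hw : IsTwistedInvolution t w)
    (hne : w ≠ 1) :
    ∃ i, cs.IsRightDescent w i ∧ hatLength t (twistedAct t w i) < hatLength t w := by
  obtain ⟨a, ha, hlen⟩ := exists_iota_eq_length_eq_hatLength hw.exists_iota_eq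
  rcases a.eq_nil_or_concat with rfl | ⟨b, i, rfl⟩
  · exact absurd ha.symm hne
  rw [List.concat_eq_append, iota_append_singleton] at ha
  rw [List.concat_eq_append, List.length_append, List.length_singleton] at hlen
  have hb := hatLength_le (t := t) (a := b) rfl
  by_cases hd : cs.IsRightDescent (iota t b) i
  · rw [invStep_of_isRightDescent hd] at ha
    have := hatLength_le ha
    omega
  rw [invStep_of_not_isRightDescent hd] at ha
  subst ha
  refine ⟨i, (isTwistedInvolution_iota b).isRightDescent_twistedAct_iff.mpr hd, ?_⟩
  rw [twistedAct_twistedAct]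
  omega

theorem IsTwistedInvolution.twistedAct_bruhatLE {w : W} (hw : IsTwistedInvolution t w) {i : B}
    (h : cs.IsRightDescent w i) : cs.BruhatLE (twistedAct t w i) w := by
  have hws := bruhatLE_of_length_mul_reflection_lt (cs.isReflection_simple i) h
  unfold twistedAct
  split_ifs with hfix
  · exact hws
  · rw [mul_assoc, t.auto_simple]
    exact (bruhatLE_of_length_reflection_mul_lt (cs.isReflection_simple _)
      ((hw.isLeftDescent_mul_simple_iff h).mpr hfix)).trans hws

theorem bruhatLE_twistedAct_of_not_isRightDescent {u w : W} (hu : IsTwistedInvolution t u)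
    (hw : IsTwistedInvolution t w) (huw : cs.BruhatLE u w) {i : B} (hwi : cs.IsRightDescent w i)
    (hui : ¬cs.IsRightDescent u i) : cs.BruhatLE u (twistedAct t w i) := by
  have h₁ := huw.le_mul_simple hwi hui
  unfold twistedAct
  split_ifs with hfix
  · exact h₁
  · rw [mul_assoc, t.auto_simple]
    refine h₁.le_simple_mul ((hw.isLeftDescent_mul_simple_iff hwi).mpr hfix) ?_
    rwa [IsLeftDescent, ← t.auto_simple, hu.length_auto_simple_mul]

theorem twistedAct_bruhatLE_twistedAct {u w : W} (hu : IsTwistedInvolution t u)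
    (hw : IsTwistedInvolution t w) (huw : cs.BruhatLE u w) {i : B} (hui : cs.IsRightDescent u i)
    (hwi : cs.IsRightDescent w i) : cs.BruhatLE (twistedAct t u i) (twistedAct t w i) := by
  have h₁ := huw.mul_simple hui hwi
  have hu' := hu.isLeftDescent_mul_simple_iff hui
  have hw' := hw.isLeftDescent_mul_simple_iff hwi
  unfold twistedAct
  split_ifs with hfu hfw hfw
  · exact h₁
  · rw [mul_assoc _ w, t.auto_simple]
    exact h₁.le_simple_mul (hw'.mpr hfw) (hu'.not.mpr (not_not.mpr hfu))
  · rw [mul_assoc _ u, t.auto_simple]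
    exact (bruhatLE_of_length_reflection_mul_lt (cs.isReflection_simple _) (hu'.mpr hfu)).trans h₁
  · rw [mul_assoc _ u, mul_assoc _ w, t.auto_simple]
    exact h₁.simple_mul (hu'.mpr hfu) (hw'.mpr hfw)

theorem hatLength_lt_of_bruhatLE {u w : W} (hu : IsTwistedInvolution t u)
    (hw : IsTwistedInvolution t w) (huw : cs.BruhatLE u w) (hne : u ≠ w) :
    hatLength t u < hatLength t w := by
  induction h : ℓ w using Nat.strong_induction_on generalizing u w with
  | _ n ih =>
  have hw1 : w ≠ 1 := by
    rintro rfl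
    rcases huw.eq_or_length_lt with h' | h'
    · exact hne h'
    · simp at h'
  obtain ⟨i, hi, hlt⟩ := hw.exists_hatLength_twistedAct_lt hw1
  have hz := isTwistedInvolution_twistedAct hw i
  have hzw : ℓ (twistedAct t w i) < n := h ▸ hw.length_twistedAct_lt hi
  by_cases hui : cs.IsRightDescent u i
  · have hne' : twistedAct t u i ≠ twistedAct t w i := fun heq =>
      hne (by simpa [twistedAct_twistedAct] using congrArg (twistedAct t · i) heq)
    have := ih _ hzw (isTwistedInvolution_twistedAct hu i) hz
      (twistedAct_bruhatLE_twistedAct hu hw huw hui hi) hne' rfl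
    have := hu.hatLength_le_hatLength_twistedAct_add_one hui
    omega
  · have hle := bruhatLE_twistedAct_of_not_isRightDescent hu hw huw hi hui
    rcases eq_or_ne u (twistedAct t w i) with rfl | hne'
    · exact hlt
    · have := ih _ hzw hu hz hle hne' rfl
      omega

theorem IsTwistedInvolution.hatLength_eq_hatLength_twistedAct_add_one {w : W}
    (hw : IsTwistedInvolution t w) {i : B} (h : cs.IsRightDescent w i) :
    hatLength t w = hatLength t (twistedAct t w i) + 1 := by
  have := hatLength_lt_of_bruhatLE (isTwistedInvolution_twistedAct hw i) hw
    (hw.twistedAct_bruhatLE h) fun heq => (hw.length_twistedAct_lt h).ne (congrArg _ heq)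
  have := hw.hatLength_le_hatLength_twistedAct_add_one h
  omega

end TwistedCoxeter

namespace TwistedCoxeter

/-- Every twisted involution has an involution word; moreover if
`ℓ(w * s i) < ℓ(w)` and `v` is `w * s i` (if `(s i)* * w * s i = w`) or `(s i)* * w * s i`
(otherwise), then `v ∈ I_*`, `ℓ̂(w) = ℓ̂(v) + 1`, and appending `i` to any involution word
for `v` gives an involution word for `w`. -/
theorem statement_2 {B W : Type*} [Group W] {M : CoxeterMatrix B} {cs : CoxeterSystem M W}
    (t : Twisting cs) :
    (∀ w : W, IsTwistedInvolution t w → ∃ a : List B, IsInvolutionWord t w a) ∧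
    (∀ w : W, IsTwistedInvolution t w → ∀ i : B, cs.length (w * cs.simple i) < cs.length w →
      ∀ v : W,
        v = (if t.auto (cs.simple i) * w * cs.simple i = w then w * cs.simple i
             else t.auto (cs.simple i) * w * cs.simple i) →
        IsTwistedInvolution t v ∧ hatLength t w = hatLength t v + 1 ∧
          ∀ a : List B, IsInvolutionWord t v a → IsInvolutionWord t w (a ++ [i])) := by
  refine ⟨fun w hw => ?_, fun w hw i hi v hv => ?_⟩
  · obtain ⟨a, ha⟩ := exists_iota_eq_length_eq_hatLength hw.exists_iota_eq
    exact ⟨a, isInvolutionWord_iff.mpr ha⟩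
  obtain rfl : v = twistedAct t w i := hv
  have hlen := hw.hatLength_eq_hatLength_twistedAct_add_one hi
  refine ⟨isTwistedInvolution_twistedAct hw i, hlen, fun a ha => ?_⟩
  obtain ⟨ha, ha'⟩ := isInvolutionWord_iff.mp ha
  rw [isInvolutionWord_iff, iota_append_singleton, ha, hw.invStep_twistedAct hi,
    List.length_append, ha', hlen, List.length_singleton]
  exact ⟨rfl, rfl⟩

end TwistedCoxeter
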